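/- Let S be the set of positive rationals s such that both U ↦ sU and U ↦ s⁻¹U map 𝒰 into itself. Then S is a subgroup of the multiplicative group ℚ₊^×, and S equals the subgroup generated by the set P of primes p which divide a_k for infinitely many k < 0 and infinitely many k ≥ 0. -/

import Mathlib

/-!
Everything is read off `p`-adic valuations. If `p` divides `a_k` for infinitely many `k ≥ 0`,
then `p m` still divides some `a_0 ⋯ a_j`, so `U ↦ pU` preserves `𝒰`; dually for `p⁻¹` and
`k < 0`. Conversely, if `p` divides only finitely many `a_k` with `k ≥ 0`, then
`v_p(a_0 ⋯ a_j)` is bounded in `j`, the bound is attained by `U = (a_0 ⋯ a_J)ℤ ∈ 𝒰`, and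
`v_p(sU) = v_p(s) + v_p(U)` forces `v_p(s) ≤ 0`; for `k < 0` one uses `U = (a_{-1} ⋯ a_{-K})⁻¹ℤ`
and `s⁻¹`. Hence `v_p(s) ≠ 0` implies `p ∈ P`, and `s` is a product of such primes.
-/

/-- `a_{-1} a_{-2} ⋯ a_{-k}`. -/
def prodNeg (a : ℤ → ℤ) (k : ℕ) : ℤ := ∏ i ∈ Finset.range k, a (-(i : ℤ) - 1)

/-- `a_0 a_1 ⋯ a_{j-1}`. -/
def prodPos (a : ℤ → ℤ) (j : ℕ) : ℤ := ∏ i ∈ Finset.range j, a (i : ℤ)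

/-- The family `𝒰` of subgroups `(m/n)ℤ` of `ℚ`, where `m` divides `a_0⋯a_j` for some
`j ≥ 0` and `n` divides `a_{-1}⋯a_{-k}` for some `k ≥ 1`. -/
def Ufam (a : ℤ → ℤ) : Set (AddSubgroup ℚ) :=
  {U | ∃ m n : ℕ, 0 < m ∧ 0 < n ∧ (∃ j : ℕ, (m : ℤ) ∣ prodPos a (j + 1)) ∧
    (∃ k : ℕ, 1 ≤ k ∧ (n : ℤ) ∣ prodNeg a k) ∧
    U = AddSubgroup.zmultiples ((m : ℚ) / (n : ℚ))}


/-- Multiplication of a subgroup of `ℚ` by a rational number `s`: the image `sU`. -/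
def smulSub (s : ℚ) (U : AddSubgroup ℚ) : AddSubgroup ℚ :=
  U.map (DistribMulAction.toAddMonoidHom ℚ s)

open Finset

section PartialProducts

variable {b : ℕ → ℤ} {p : ℕ}

lemma prod_range_dvd_prod_range {M : Type*} [CommMonoid M] (f : ℕ → M) {j j' : ℕ}
    (h : j ≤ j') : ∏ i ∈ range j, f i ∣ ∏ i ∈ range j', f i :=
  prod_dvd_prod_of_subset _ _ f (range_subset_range.mpr h)

lemma padicValInt_le_of_dvd [Fact p.Prime] {x y : ℤ} (hy : y ≠ 0) (h : x ∣ y) :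
    padicValInt p x ≤ padicValInt p y :=
  ((padicValInt_dvd_iff _ y).mp ((padicValInt_dvd x).trans h)).resolve_left hy

lemma exists_mul_dvd_prod_range_of_infinite (hinf : {i | (p : ℤ) ∣ b i}.Infinite) (j : ℕ) :
    ∃ j', (p : ℤ) * ∏ i ∈ range j, b i ∣ ∏ i ∈ range j', b i := by
  obtain ⟨i, hi, hji⟩ := hinf.exists_gt j
  refine ⟨i + 1, ?_⟩
  rw [← prod_range_mul_prod_Ico b (show j ≤ i + 1 by omega), mul_comm]
  exact mul_dvd_mul_left _ (hi.trans (dvd_prod_of_mem b (by simp; omega)))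

lemma padicValInt_prod_range_le_of_finite [Fact p.Prime] (hb : ∀ i, b i ≠ 0)
    (hfin : {i | (p : ℤ) ∣ b i}.Finite) :
    ∃ J, ∀ j, padicValInt p (∏ i ∈ range j, b i) ≤ padicValInt p (∏ i ∈ range J, b i) := by
  obtain ⟨J, hJ⟩ := hfin.bddAbove
  refine ⟨J + 1, fun j => ?_⟩
  have hprod_ne_zero (s : Finset ℕ) : ∏ i ∈ s, b i ≠ 0 := prod_ne_zero_iff.mpr fun i _ => hb i
  have htail : padicValInt p (∏ i ∈ Ico (J + 1) (max j (J + 1)), b i) = 0 := by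
    refine padicValInt.eq_zero_of_not_dvd fun h => ?_
    obtain ⟨i, hi, hpi⟩ := (Nat.prime_iff_prime_int.mp Fact.out).exists_mem_finset_dvd h
    have := hJ hpi
    simp only [mem_Ico] at hi
    omega
  calc padicValInt p (∏ i ∈ range j, b i)
      ≤ padicValInt p (∏ i ∈ range (max j (J + 1)), b i) :=
        padicValInt_le_of_dvd (hprod_ne_zero _) (prod_range_dvd_prod_range b (le_max_left _ _))
    _ = padicValInt p (∏ i ∈ range (J + 1), b i) := by
        rw [← prod_range_mul_prod_Ico b (le_max_right j (J + 1)),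
          padicValInt.mul (hprod_ne_zero _) (hprod_ne_zero _), htail, add_zero]

end PartialProducts

lemma infinite_setOf_nonneg_and_iff {P : ℤ → Prop} :
    {k : ℤ | 0 ≤ k ∧ P k}.Infinite ↔ {i : ℕ | P i}.Infinite := by
  have : {k : ℤ | 0 ≤ k ∧ P k} = Nat.cast '' {i : ℕ | P i} := by
    ext k
    constructor
    · rintro ⟨hk, hP⟩
      exact ⟨k.toNat, by simpa [hk] using hP, by simp [hk]⟩
    · rintro ⟨i, hP, rfl⟩
      exact ⟨i.cast_nonneg, hP⟩
  rw [this, Set.infinite_image_iff Nat.cast_injective.injOn]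

lemma infinite_setOf_neg_and_iff {P : ℤ → Prop} :
    {k : ℤ | k < 0 ∧ P k}.Infinite ↔ {i : ℕ | P (-i - 1)}.Infinite := by
  have : {k : ℤ | k < 0 ∧ P k} = (fun i : ℕ => -(i : ℤ) - 1) '' {i : ℕ | P (-i - 1)} := by
    ext k
    constructor
    · rintro ⟨hk, hP⟩
      have hk' : -((-k - 1).toNat : ℤ) - 1 = k := by omega
      refine ⟨(-k - 1).toNat, ?_, hk'⟩
      change P (-((-k - 1).toNat : ℤ) - 1)
      rwa [hk']
    · rintro ⟨i, hP, rfl⟩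
      refine ⟨?_, hP⟩
      dsimp only
      omega
  rw [this, Set.infinite_image_iff fun i _ j _ h => by simpa using h]

lemma zmultiples_eq_zmultiples_iff_of_pos {r r' : ℚ} (hr : 0 < r) (hr' : 0 < r') :
    AddSubgroup.zmultiples r = AddSubgroup.zmultiples r' ↔ r = r' := by
  rw [AddSubgroup.zmultiples_eq_zmultiples_iff (not_isOfFinAddOrder_of_isAddTorsionFree hr.ne')]
  constructor
  · rintro (h | h)
    · exact h
    · linarith
  · exact Or.inl

lemma smulSub_zmultiples (s r : ℚ) :
    smulSub s (AddSubgroup.zmultiples r) = AddSubgroup.zmultiples (s * r) :=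
  AddMonoidHom.map_zmultiples _ r

lemma smulSub_one (U : AddSubgroup ℚ) : smulSub 1 U = U := by
  ext x
  simp [smulSub]

lemma smulSub_mul (s t : ℚ) (U : AddSubgroup ℚ) :
    smulSub (s * t) U = smulSub s (smulSub t U) := by
  ext x
  simp [smulSub, mul_assoc]

section Ufam

variable {a : ℤ → ℤ}

lemma prodPos_ne_zero (ha : ∀ i, a i ≠ 0) (j : ℕ) : prodPos a j ≠ 0 :=
  prod_ne_zero_iff.mpr fun _ _ => ha _

lemma prodNeg_ne_zero (ha : ∀ i, a i ≠ 0) (k : ℕ) : prodNeg a k ≠ 0 :=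
  prod_ne_zero_iff.mpr fun _ _ => ha _

lemma exists_dvd_prodPos_succ_iff {x : ℤ} :
    (∃ j, x ∣ prodPos a (j + 1)) ↔ ∃ j, x ∣ prodPos a j :=
  ⟨fun ⟨j, h⟩ => ⟨j + 1, h⟩,
    fun ⟨j, h⟩ => ⟨j, h.trans (prod_range_dvd_prod_range _ j.le_succ)⟩⟩

lemma exists_one_le_dvd_prodNeg_iff {x : ℤ} :
    (∃ k, 1 ≤ k ∧ x ∣ prodNeg a k) ↔ ∃ k, x ∣ prodNeg a k :=
  ⟨fun ⟨k, _, h⟩ => ⟨k, h⟩,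
    fun ⟨k, h⟩ => ⟨k + 1, k.succ_pos, h.trans (prod_range_dvd_prod_range _ k.le_succ)⟩⟩

lemma mem_Ufam_iff {U : AddSubgroup ℚ} :
    U ∈ Ufam a ↔ ∃ m n : ℕ, 0 < m ∧ 0 < n ∧ (∃ j, (m : ℤ) ∣ prodPos a j) ∧
      (∃ k, (n : ℤ) ∣ prodNeg a k) ∧ U = AddSubgroup.zmultiples ((m : ℚ) / n) := by
  simp only [Ufam, exists_dvd_prodPos_succ_iff, exists_one_le_dvd_prodNeg_iff]
  rfl

lemma zmultiples_natAbs_prodPos_mem_Ufam (ha : ∀ i, a i ≠ 0) (j : ℕ) :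
    AddSubgroup.zmultiples ((prodPos a j).natAbs : ℚ) ∈ Ufam a :=
  mem_Ufam_iff.mpr ⟨_, 1, Int.natAbs_pos.mpr (prodPos_ne_zero ha j), one_pos,
    ⟨j, Int.natAbs_dvd.mpr dvd_rfl⟩, ⟨0, one_dvd _⟩, by simp⟩

lemma zmultiples_inv_natAbs_prodNeg_mem_Ufam (ha : ∀ i, a i ≠ 0) (k : ℕ) :
    AddSubgroup.zmultiples (((prodNeg a k).natAbs : ℚ)⁻¹) ∈ Ufam a :=
  mem_Ufam_iff.mpr ⟨1, _, one_pos, Int.natAbs_pos.mpr (prodNeg_ne_zero ha k),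
    ⟨0, one_dvd _⟩, ⟨k, Int.natAbs_dvd.mpr dvd_rfl⟩, by simp⟩

lemma natCast_smulSub_mem_Ufam {p : ℕ} (hp : 0 < p)
    (hinf : {k : ℤ | 0 ≤ k ∧ (p : ℤ) ∣ a k}.Infinite) {U : AddSubgroup ℚ} (hU : U ∈ Ufam a) :
    smulSub p U ∈ Ufam a := by
  obtain ⟨m, n, hm, hn, ⟨j, hj⟩, hk, rfl⟩ := mem_Ufam_iff.mp hU
  rw [infinite_setOf_nonneg_and_iff] at hinf
  obtain ⟨j', hj'⟩ := exists_mul_dvd_prod_range_of_infinite hinf j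
  refine mem_Ufam_iff.mpr ⟨p * m, n, Nat.mul_pos hp hm, hn, ⟨j', ?_⟩, hk, ?_⟩
  · push_cast
    exact (mul_dvd_mul_left _ hj).trans hj'
  · rw [smulSub_zmultiples]
    push_cast
    ring_nf

lemma inv_natCast_smulSub_mem_Ufam {p : ℕ} (hp : 0 < p)
    (hinf : {k : ℤ | k < 0 ∧ (p : ℤ) ∣ a k}.Infinite) {U : AddSubgroup ℚ} (hU : U ∈ Ufam a) :
    smulSub (p : ℚ)⁻¹ U ∈ Ufam a := by
  obtain ⟨m, n, hm, hn, hj, ⟨k, hk⟩, rfl⟩ := mem_Ufam_iff.mp hU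
  rw [infinite_setOf_neg_and_iff] at hinf
  obtain ⟨k', hk'⟩ := exists_mul_dvd_prod_range_of_infinite hinf k
  refine mem_Ufam_iff.mpr ⟨m, p * n, hm, Nat.mul_pos hp hn, hj, ⟨k', ?_⟩, ?_⟩
  · push_cast
    exact (mul_dvd_mul_left _ hk).trans hk'
  · rw [smulSub_zmultiples]
    push_cast
    rw [mul_comm (p : ℚ), ← div_div, inv_mul_eq_div]

section Valuation

variable {p : ℕ} [Fact p.Prime]

lemma padicValRat_bounds_of_mem_Ufam (ha : ∀ i, a i ≠ 0) {r : ℚ} (hr : 0 < r)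
    (hU : AddSubgroup.zmultiples r ∈ Ufam a) :
    (∃ j, padicValRat p r ≤ padicValInt p (prodPos a j)) ∧
      ∃ k, -(padicValInt p (prodNeg a k) : ℤ) ≤ padicValRat p r := by
  obtain ⟨m, n, hm, hn, ⟨j, hj⟩, ⟨k, hk⟩, hU⟩ := mem_Ufam_iff.mp hU
  have hr : r = m / n := (zmultiples_eq_zmultiples_iff_of_pos hr (by positivity)).mp hU
  have hval : padicValRat p r = padicValInt p m - padicValInt p n := by
    rw [hr, padicValRat.div (by positivity) (by positivity)]
    simp only [padicValRat.of_nat, padicValInt.of_nat]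
  have hjm := padicValInt_le_of_dvd (p := p) (prodPos_ne_zero ha j) hj
  have hkn := padicValInt_le_of_dvd (p := p) (prodNeg_ne_zero ha k) hk
  exact ⟨⟨j, by omega⟩, ⟨k, by omega⟩⟩

lemma infinite_nonneg_of_padicValRat_pos (ha : ∀ i, a i ≠ 0) {s : ℚ} (hs : 0 < s)
    (hS : ∀ U ∈ Ufam a, smulSub s U ∈ Ufam a) (hv : 0 < padicValRat p s) :
    {k : ℤ | 0 ≤ k ∧ (p : ℤ) ∣ a k}.Infinite := by
  rw [infinite_setOf_nonneg_and_iff]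
  intro hfin
  obtain ⟨J, hJ⟩ := padicValInt_prod_range_le_of_finite (b := fun i => a i) (fun i => ha i) hfin
  set A : ℚ := ((prodPos a J).natAbs : ℚ)
  have hA : 0 < A := by simpa [A] using prodPos_ne_zero ha J
  have hmem := hS _ (zmultiples_natAbs_prodPos_mem_Ufam ha J)
  rw [smulSub_zmultiples] at hmem
  obtain ⟨⟨j, hj⟩, -⟩ := padicValRat_bounds_of_mem_Ufam (p := p) ha (mul_pos hs hA) hmem
  have hvA : padicValRat p A = padicValInt p (prodPos a J) := padicValRat.of_nat
  rw [padicValRat.mul hs.ne' hA.ne', hvA] at hj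
  have := hJ j
  simp only [prodPos] at hj
  omega

lemma infinite_neg_of_padicValRat_pos (ha : ∀ i, a i ≠ 0) {s : ℚ} (hs : 0 < s)
    (hS : ∀ U ∈ Ufam a, smulSub s⁻¹ U ∈ Ufam a) (hv : 0 < padicValRat p s) :
    {k : ℤ | k < 0 ∧ (p : ℤ) ∣ a k}.Infinite := by
  rw [infinite_setOf_neg_and_iff]
  intro hfin
  obtain ⟨K, hK⟩ := padicValInt_prod_range_le_of_finite (b := fun i => a (-i - 1))
    (fun i => ha _) hfin
  set B : ℚ := ((prodNeg a K).natAbs : ℚ)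
  have hB : 0 < B := by simpa [B] using prodNeg_ne_zero ha K
  have hmem := hS _ (zmultiples_inv_natAbs_prodNeg_mem_Ufam ha K)
  rw [smulSub_zmultiples] at hmem
  obtain ⟨-, ⟨k, hk⟩⟩ :=
    padicValRat_bounds_of_mem_Ufam (p := p) ha (mul_pos (inv_pos.mpr hs) (inv_pos.mpr hB)) hmem
  have hvB : padicValRat p B = padicValInt p (prodNeg a K) := padicValRat.of_nat
  rw [padicValRat.mul (inv_ne_zero hs.ne') (inv_ne_zero hB.ne'), padicValRat.inv,
    padicValRat.inv, hvB] at hk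
  have := hK k
  simp only [prodNeg] at hk
  omega

lemma infinite_of_padicValRat_ne_zero (ha : ∀ i, a i ≠ 0) {s : ℚ} (hs : 0 < s)
    (hS : ∀ U ∈ Ufam a, smulSub s U ∈ Ufam a) (hS' : ∀ U ∈ Ufam a, smulSub s⁻¹ U ∈ Ufam a)
    (hv : padicValRat p s ≠ 0) :
    {k : ℤ | k < 0 ∧ (p : ℤ) ∣ a k}.Infinite ∧ {k : ℤ | 0 ≤ k ∧ (p : ℤ) ∣ a k}.Infinite := by
  wlog hpos : 0 < padicValRat p s generalizing s
  · refine this (inv_pos.mpr hs) hS' (by simpa using hS) ?_ ?_ <;>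
      rw [padicValRat.inv] <;> omega
  exact ⟨infinite_neg_of_padicValRat_pos ha hs hS' hpos,
    infinite_nonneg_of_padicValRat_pos ha hs hS hpos⟩

end Valuation

def stabilizerUfam (a : ℤ → ℤ) : Subgroup ℚˣ where
  carrier := {u : ℚˣ | 0 < (u : ℚ) ∧
    (∀ U ∈ Ufam a, smulSub (u : ℚ) U ∈ Ufam a) ∧
    (∀ U ∈ Ufam a, smulSub ((u⁻¹ : ℚˣ) : ℚ) U ∈ Ufam a)}
  one_mem' := ⟨one_pos, by simp [smulSub_one]⟩
  mul_mem' := by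
    rintro u v ⟨hu, hSu, hSu'⟩ ⟨hv, hSv, hSv'⟩
    refine ⟨by simpa using mul_pos hu hv, fun U hU => ?_, fun U hU => ?_⟩
    · rw [Units.val_mul, smulSub_mul]
      exact hSu _ (hSv _ hU)
    · rw [mul_inv, Units.val_mul, smulSub_mul]
      exact hSu' _ (hSv' _ hU)
  inv_mem' := by
    rintro u ⟨hu, hS, hS'⟩
    exact ⟨by simpa using hu, hS', by simpa using hS⟩

end Ufam

lemma Subgroup.exists_coe_eq_natCast {R : Type*} [CommSemiring R] (H : Subgroup Rˣ) {n : ℕ}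
    (hn : n ≠ 0) (h : ∀ p, p.Prime → p ∣ n → ∃ u ∈ H, (u : R) = p) :
    ∃ u ∈ H, (u : R) = n := by
  induction n using induction_on_primes with
  | zero => exact absurd rfl hn
  | one => exact ⟨1, H.one_mem, by simp⟩
  | prime_mul p n hp ih =>
    obtain ⟨u, hu, hup⟩ := h p hp (dvd_mul_right p n)
    obtain ⟨v, hv, hvn⟩ := ih (right_ne_zero_of_mul hn) fun q hq hqn =>
      h q hq (hqn.trans (dvd_mul_left n p))
    exact ⟨u * v, H.mul_mem hu hv, by simp [hup, hvn]⟩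

section RatValuation

variable {p : ℕ} [Fact p.Prime] {q : ℚ}

lemma Rat.not_dvd_den_of_dvd_num (h : (p : ℤ) ∣ q.num) : ¬p ∣ q.den := fun hden =>
  (Fact.out : p.Prime).one_lt.ne'
    (Nat.eq_one_of_dvd_coprimes q.reduced (Int.natCast_dvd.mp h) hden)

lemma padicValRat_pos_of_dvd_num (hq : q ≠ 0) (h : (p : ℤ) ∣ q.num) : 0 < padicValRat p q := by
  have hnum := ((padicValInt_dvd_iff 1 q.num).mp (by simpa using h)).resolve_left
    (Rat.num_ne_zero.mpr hq)
  have hden := padicValNat.eq_zero_of_not_dvd (Rat.not_dvd_den_of_dvd_num h)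
  change 0 < (padicValInt p q.num : ℤ) - padicValNat p q.den
  omega

lemma padicValRat_neg_of_dvd_den (h : p ∣ q.den) : padicValRat p q < 0 := by
  have hnum := padicValInt.eq_zero_of_not_dvd (mt Rat.not_dvd_den_of_dvd_num (not_not.mpr h))
  have hden := one_le_padicValNat_of_dvd q.den_nz h
  change (padicValInt p q.num : ℤ) - padicValNat p q.den < 0
  omega

end RatValuation

lemma Subgroup.mem_of_padicValRat_ne_zero (H : Subgroup ℚˣ) {u : ℚˣ} (hu : 0 < (u : ℚ))
    (h : ∀ p, p.Prime → padicValRat p u ≠ 0 → ∃ v ∈ H, (v : ℚ) = p) : u ∈ H := by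
  obtain ⟨v, hv, hvu⟩ := H.exists_coe_eq_natCast (n := (u : ℚ).num.natAbs)
    (Int.natAbs_ne_zero.mpr (Rat.num_ne_zero.mpr hu.ne')) fun p hp hpu => by
      have : Fact p.Prime := ⟨hp⟩
      exact h p hp (padicValRat_pos_of_dvd_num hu.ne' (Int.natCast_dvd.mpr hpu)).ne'
  obtain ⟨w, hw, hwu⟩ := H.exists_coe_eq_natCast (u : ℚ).den_nz fun p hp hpu => by
    have : Fact p.Prime := ⟨hp⟩
    exact h p hp (padicValRat_neg_of_dvd_den hpu).ne
  have hnum : ((u : ℚ).num.natAbs : ℚ) = (u : ℚ).num := by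
    rw [Nat.cast_natAbs, abs_of_nonneg (Rat.num_nonneg.mpr hu.le)]
  have huvw : u = v * w⁻¹ := by
    ext
    rw [Units.val_mul, Units.val_inv_eq_inv_val, hvu, hwu, ← div_eq_mul_inv, hnum,
      Rat.num_div_den]
  rw [huvw]
  exact H.mul_mem hv (H.inv_mem hw)

/-- the set `S` of positive rationals `s` such that both `U ↦ sU` and
`U ↦ s⁻¹U` map `𝒰` into itself is a subgroup of the positive rationals (viewed inside
`ℚˣ`), and it equals the subgroup generated by the primes dividing `a_k` for infinitely
many `k < 0` and infinitely many `k ≥ 0`. -/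
theorem stmt7 (a : ℤ → ℤ) (ha : ∀ i, 2 ≤ a i) :
    ∃ S : Subgroup ℚˣ,
      (S : Set ℚˣ) = {u : ℚˣ | 0 < (u : ℚ) ∧
          (∀ U ∈ Ufam a, smulSub (u : ℚ) U ∈ Ufam a) ∧
          (∀ U ∈ Ufam a, smulSub ((u⁻¹ : ℚˣ) : ℚ) U ∈ Ufam a)} ∧
      S = Subgroup.closure {u : ℚˣ | ∃ p : ℕ, p.Prime ∧ (u : ℚ) = (p : ℚ) ∧
          {k : ℤ | k < 0 ∧ (p : ℤ) ∣ a k}.Infinite ∧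
          {k : ℤ | 0 ≤ k ∧ (p : ℤ) ∣ a k}.Infinite} := by
  have ha' : ∀ i, a i ≠ 0 := fun i => by linarith [ha i]
  refine ⟨stabilizerUfam a, rfl, le_antisymm ?_ ((Subgroup.closure_le _).mpr ?_)⟩
  · rintro u ⟨hu, hS, hS'⟩
    refine Subgroup.mem_of_padicValRat_ne_zero _ hu fun p hp hv => ?_
    have : Fact p.Prime := ⟨hp⟩
    have hP := infinite_of_padicValRat_ne_zero ha' hu hS (by simpa using hS') hv
    exact ⟨Units.mk0 p (by exact_mod_cast hp.ne_zero),
      Subgroup.subset_closure ⟨p, hp, rfl, hP⟩, rfl⟩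
  · rintro u ⟨p, hp, hu, hneg, hpos⟩
    refine ⟨by rw [hu]; exact_mod_cast hp.pos, fun U hU => ?_, fun U hU => ?_⟩
    · rw [hu]
      exact natCast_smulSub_mem_Ufam hp.pos hpos hU
    · rw [Units.val_inv_eq_inv_val, hu]
      exact inv_natCast_smulSub_mem_Ufam hp.pos hneg hU
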